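/- Let L ∈ 𝐋 and V ∈ 𝒱(L), and suppose that for every t = 1,…,T one has ‖V_{•,t}‖_op² < λ⁺_min((LᵀL)_{t,t}), where ‖V_{•,t}‖_op is the operator norm of the t-th block column of V and λ⁺_min(A) denotes the smallest strictly positive eigenvalue of the positive semidefinite matrix A (with λ⁺_min(A) := +∞ if A = 0). Then ((L+V)ᵀL)_{t,t} is positive semidefinite for all t = 1,…,T, and 𝐎*(L, L+V) = 𝐎*(L,L). In particular, if L ∈ 𝐋^reg then 𝐎*(L, L+V) = {Id}. -/

import Mathlib

open Matrix Filter Topology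

/-- Square matrices of size `dT × dT`, indexed by blocks: index `(t, i)` is
row/column `i` within block `t`. -/
abbrev Mat (d T : ℕ) := Matrix (Fin T × Fin d) (Fin T × Fin d) ℝ

/-- The `t`-th diagonal `d × d` block of a `dT × dT` matrix. -/
def blk {d T : ℕ} (A : Mat d T) (t : Fin T) : Matrix (Fin d) (Fin d) ℝ :=
  fun i j => A (t, i) (t, j)

/-- The `t`-th block column of a `dT × dT` matrix, a `dT × d` matrix. -/
def colBlk {d T : ℕ} (A : Mat d T) (t : Fin T) : Matrix (Fin T × Fin d) (Fin d) ℝ :=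
  fun p j => A p (t, j)

/-- Membership in `𝐋`: block lower triangular matrices. -/
def memL {d T : ℕ} (A : Mat d T) : Prop :=
  ∀ (t s : Fin T) (i j : Fin d), t < s → A (t, i) (s, j) = 0

/-- Membership in `𝐎`: block diagonal matrices with orthogonal `d × d` diagonal blocks
(equivalently: block diagonal and orthogonal). -/
def memO {d T : ℕ} (O : Mat d T) : Prop :=
  (∀ (t s : Fin T) (i j : Fin d), t ≠ s → O (t, i) (s, j) = 0) ∧ Oᵀ * O = 1

/-- The Frobenius norm of a real matrix. -/
noncomputable def frobNorm {m n : Type*} [Fintype m] [Fintype n] (A : Matrix m n ℝ) : ℝ :=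
  Real.sqrt (∑ i, ∑ j, (A i j) ^ 2)

/-- The Frobenius inner product of two real matrices. -/
noncomputable def frobInner {m n : Type*} [Fintype m] [Fintype n] (A B : Matrix m n ℝ) : ℝ :=
  ∑ i, ∑ j, A i j * B i j

/-- The adapted Bures–Wasserstein distance `d_ABW(L, M) = inf_{O ∈ 𝐎} ‖L - M O‖_F`. -/
noncomputable def dABW {d T : ℕ} (L M : Mat d T) : ℝ :=
  sInf {r : ℝ | ∃ O : Mat d T, memO O ∧ r = frobNorm (L - M * O)}

/-- The set `𝐎*(L, M)` of optimizers of `inf_{O ∈ 𝐎} ‖L - M O‖_F`. -/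
noncomputable def OStar {d T : ℕ} (L M : Mat d T) : Set (Mat d T) :=
  {O | memO O ∧ frobNorm (L - M * O) = dABW L M}

/-- The set `𝐕(L) = {M P - L : M ∈ 𝐋, P ∈ 𝐎*(L, M)}`. -/
noncomputable def VSet {d T : ℕ} (L : Mat d T) : Set (Mat d T) :=
  {V | ∃ M P : Mat d T, memL M ∧ P ∈ OStar L M ∧ V = M * P - L}

/-- The set `𝒱(L) = {V ∈ 𝐋 : (Vᵀ L)_{t,t} is symmetric for all t}`. -/
def calV {d T : ℕ} (L : Mat d T) : Set (Mat d T) :=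
  {V | memL V ∧ ∀ t : Fin T, (blk (Vᵀ * L) t).IsSymm}

/-- The set `𝐋^reg = {L ∈ 𝐋 : (Lᵀ L)_{t,t} is positive definite for all t}`. -/
def LReg {d T : ℕ} : Set (Mat d T) :=
  {L | memL L ∧ ∀ t : Fin T, (blk (Lᵀ * L) t).PosDef}

/-- The sum of the singular values of a real square matrix `A`,
i.e. the trace of the positive semidefinite square root of `Aᵀ A`. -/
noncomputable def svSum {n : ℕ} (A : Matrix (Fin n) (Fin n) ℝ) : ℝ :=
  ((Matrix.posSemidef_conjTranspose_mul_self A).1.eigenvectorUnitary.1 *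
    diagonal (((↑) : ℝ → ℝ) ∘ (√·) ∘ (Matrix.posSemidef_conjTranspose_mul_self A).1.eigenvalues) *
    (star (Matrix.posSemidef_conjTranspose_mul_self A).1.eigenvectorUnitary : Matrix (Fin n) (Fin n) ℝ)).trace

/-- The operator norm of a real matrix: the supremum of the euclidean norm `‖A x‖₂`
over the euclidean unit ball. -/
noncomputable def opNorm {m n : Type*} [Fintype m] [Fintype n] (A : Matrix m n ℝ) : ℝ :=
  sSup {r : ℝ | ∃ x : n → ℝ, (∑ j, (x j) ^ 2) ≤ 1 ∧ r = Real.sqrt (∑ i, (A.mulVec x i) ^ 2)}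

/-! Write `Lₜ, Vₜ` for the `t`-th block columns, so that `((L + V)ᵀ L)ₜₜ = (Lₜ + Vₜ)ᵀ Lₜ =: Sₜ`,
which is symmetric because `V ∈ 𝒱(L)`. Diagonalising `LₜᵀLₜ`, split `x = x₀ + x₁` with `Lₜ x₀ = 0`
and `x₁` in the span of the eigenvectors with positive eigenvalue. Then
`xᵀ Sₜ x = ‖Lₜ x₁‖² + ⟪Vₜ x₁, Lₜ x₁⟫`, and the spectral gap gives `‖Vₜ x₁‖ < ‖Lₜ x₁‖` unless
`x₁ = 0`. Hence `Sₜ` is positive semidefinite with `ker Sₜ = ker Lₜ = ker (LᵀL)ₜₜ`.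

For `O ∈ 𝐎` one has `‖L - M O‖²_F = ‖L - M‖²_F + 2 ∑ₜ (tr Pₜ - tr Pₜ Oₜ)` with `Pₜ = (LᵀM)ₜₜ`,
and for `Pₜ ⪰ 0` each summand is `½ tr ((1 - Oₜ)ᵀ Pₜ (1 - Oₜ)) ≥ 0`, vanishing iff `Pₜ Oₜ = Pₜ`.
So `𝐎*(L, M) = {O ∈ 𝐎 | Pₜ Oₜ = Pₜ for all t}`, a condition that only sees `ker Pₜ`; the kernels
for `M = L + V` and `M = L` agree, and for `L ∈ 𝐋^reg` it forces `Oₜ = 1`. -/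

section DotProduct

variable {ι : Type*} [Fintype ι]

lemma dotProduct_self_eq_sum_sq (u : ι → ℝ) : u ⬝ᵥ u = ∑ i, u i ^ 2 := by
  simp only [dotProduct, sq]

lemma dotProduct_sq_le (u w : ι → ℝ) : (u ⬝ᵥ w) ^ 2 ≤ (u ⬝ᵥ u) * (w ⬝ᵥ w) := by
  simpa only [dotProduct, sq] using Finset.sum_mul_sq_le_sq_mul_sq Finset.univ u w

lemma dotProduct_self_add_pos {u w : ι → ℝ} (h : w ⬝ᵥ w < u ⬝ᵥ u) : 0 < u ⬝ᵥ u + w ⬝ᵥ u := by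
  have hw : 0 ≤ w ⬝ᵥ w := by simpa using dotProduct_self_star_nonneg w
  have hcs : (w ⬝ᵥ u) ^ 2 < (u ⬝ᵥ u) ^ 2 :=
    (dotProduct_sq_le w u).trans_lt (by nlinarith)
  linarith [abs_lt_of_sq_lt_sq hcs (by linarith), neg_abs_le (w ⬝ᵥ u)]

end DotProduct

section OpNorm

variable {m n : Type*} [Fintype m] [Fintype n]

lemma bddAbove_opNorm_set (A : Matrix m n ℝ) :
    BddAbove {r : ℝ | ∃ x : n → ℝ, (∑ j, (x j) ^ 2) ≤ 1 ∧
      r = Real.sqrt (∑ i, (A.mulVec x i) ^ 2)} := by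
  refine ⟨Real.sqrt (∑ i, ∑ j, A i j ^ 2), ?_⟩
  rintro r ⟨x, hx, rfl⟩
  refine Real.sqrt_le_sqrt (Finset.sum_le_sum fun i _ => ?_)
  calc (A.mulVec x i) ^ 2 ≤ (∑ j, A i j ^ 2) * ∑ j, x j ^ 2 :=
        Finset.sum_mul_sq_le_sq_mul_sq _ _ _
    _ ≤ ∑ j, A i j ^ 2 := mul_le_of_le_one_right (by positivity) hx

lemma mulVec_dotProduct_le_opNorm_sq (A : Matrix m n ℝ) (x : n → ℝ) :
    (A *ᵥ x) ⬝ᵥ (A *ᵥ x) ≤ opNorm A ^ 2 * (x ⬝ᵥ x) := by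
  rcases eq_or_ne x 0 with rfl | hx
  · simp
  set s := x ⬝ᵥ x
  have hs : 0 < s := by simpa [s] using dotProduct_star_self_pos_iff.2 hx
  have hunit : ∑ j, ((√s)⁻¹ • x) j ^ 2 = 1 := by
    simp only [Pi.smul_apply, smul_eq_mul, mul_pow, ← Finset.mul_sum, ← dotProduct_self_eq_sum_sq]
    rw [inv_pow, Real.sq_sqrt hs.le, inv_mul_cancel₀ hs.ne']
  have hle := le_csSup (bddAbove_opNorm_set A) ⟨_, hunit.le, rfl⟩
  rw [Real.sqrt_le_iff, mulVec_smul, ← dotProduct_self_eq_sum_sq, smul_dotProduct,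
    dotProduct_smul, smul_smul, smul_eq_mul, ← sq, inv_pow, Real.sq_sqrt hs.le] at hle
  rw [← div_le_iff₀ hs, div_eq_inv_mul]
  exact hle.2

end OpNorm

def LtPosEigenvalues {n : Type*} [Fintype n] (c : ℝ) (A : Matrix n n ℝ) : Prop :=
  ∀ μ : ℝ, 0 < μ → (∃ x : n → ℝ, x ≠ 0 ∧ A *ᵥ x = μ • x) → c < μ

section Spectral

variable {n : Type*} [Fintype n] [DecidableEq n] {A : Matrix n n ℝ}

lemma Matrix.IsHermitian.transpose_eigenvectorUnitary_mul_self (hA : A.IsHermitian) :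
    (hA.eigenvectorUnitary : Matrix n n ℝ)ᵀ * hA.eigenvectorUnitary = 1 := by
  simpa [star_eq_conjTranspose, conjTranspose_eq_transpose_of_trivial] using
    Unitary.coe_star_mul_self hA.eigenvectorUnitary

lemma Matrix.IsHermitian.mul_eigenvectorUnitary (hA : A.IsHermitian) :
    A * hA.eigenvectorUnitary = hA.eigenvectorUnitary * diagonal hA.eigenvalues := by
  nth_rw 1 [hA.spectral_theorem]
  simp [Matrix.mul_assoc, star_eq_conjTranspose, conjTranspose_eq_transpose_of_trivial,
    hA.transpose_eigenvectorUnitary_mul_self]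

lemma Matrix.PosSemidef.exists_add_of_lt_pos_eigenvalues (hA : A.PosSemidef) {c : ℝ}
    (hc : LtPosEigenvalues c A) (x : n → ℝ) :
    ∃ x₀ x₁, x = x₀ + x₁ ∧ A *ᵥ x₀ = 0 ∧ (x₁ = 0 ∨ c * (x₁ ⬝ᵥ x₁) < x₁ ⬝ᵥ (A *ᵥ x₁)) := by
  set U : Matrix n n ℝ := (hA.1.eigenvectorUnitary : Matrix n n ℝ)
  set μ := hA.1.eigenvalues
  have hUU : Uᵀ * U = 1 := hA.1.transpose_eigenvectorUnitary_mul_self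
  have hAUv : ∀ v, A *ᵥ (U *ᵥ v) = U *ᵥ (diagonal μ *ᵥ v) := fun v => by
    rw [mulVec_mulVec, hA.1.mul_eigenvectorUnitary, ← mulVec_mulVec]
  have hUdot : ∀ v w, (U *ᵥ v) ⬝ᵥ (U *ᵥ w) = v ⬝ᵥ w := fun v w => by
    rw [dotProduct_mulVec, ← mulVec_transpose, mulVec_mulVec, hUU, one_mulVec]
  have hgap : ∀ i, μ i ≠ 0 → c < μ i := fun i hi =>
    hc _ ((hA.eigenvalues_nonneg i).lt_of_ne' hi)
      ⟨_, fun h => hA.1.eigenvectorBasis.orthonormal.ne_zero i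
        (WithLp.ofLp_injective 2 (by simpa using h)), hA.1.mulVec_eigenvectorBasis i⟩
  set y₁ : n → ℝ := fun i => if μ i = 0 then 0 else (Uᵀ *ᵥ x) i
  refine ⟨x - U *ᵥ y₁, U *ᵥ y₁, by abel, ?_, ?_⟩
  · have hx : x = U *ᵥ (Uᵀ *ᵥ x) := by
      rw [mulVec_mulVec, mul_eq_one_comm.mp hUU, one_mulVec]
    have hker : diagonal μ *ᵥ (Uᵀ *ᵥ x - y₁) = 0 := by
      funext i
      by_cases hi : μ i = 0 <;> simp [y₁, mulVec_diagonal, hi]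
    rw [hx, ← mulVec_sub, hAUv, hker, mulVec_zero]
  rw [hUdot, hAUv, hUdot]
  by_cases hy : y₁ = 0
  · simp [hy]
  right
  obtain ⟨j, hj⟩ := Function.ne_iff.mp hy
  have hμj : μ j ≠ 0 := fun h => hj (by simp [y₁, h])
  simp only [dotProduct, mulVec_diagonal, Finset.mul_sum]
  refine Finset.sum_lt_sum (fun i _ => ?_) ⟨j, Finset.mem_univ j, ?_⟩
  · by_cases hi : μ i = 0
    · simp [y₁, hi]
    · nlinarith [hgap i hi, mul_self_nonneg (y₁ i)]
  · nlinarith [hgap j hμj, mul_self_pos.2 hj]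

end Spectral

section Perturbation

variable {m n : Type*} [Fintype m]

lemma isSymm_add_transpose_mul {L V : Matrix m n ℝ} (hsymm : (Vᵀ * L).IsSymm) :
    ((L + V)ᵀ * L).IsSymm := by
  rw [transpose_add, Matrix.add_mul]
  have hLL : (Lᵀ * L).IsSymm := by rw [IsSymm, transpose_mul, transpose_transpose]
  exact hLL.add hsymm

variable [Fintype n]

lemma transpose_mul_self_mulVec_eq_zero_iff (L : Matrix m n ℝ) (x : n → ℝ) :
    (Lᵀ * L) *ᵥ x = 0 ↔ L *ᵥ x = 0 := by
  simpa [conjTranspose_eq_transpose_of_trivial] using conjTranspose_mul_self_mulVec_eq_zero L x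

lemma posSemidef_transpose_mul_self (L : Matrix m n ℝ) : (Lᵀ * L).PosSemidef := by
  simpa [conjTranspose_eq_transpose_of_trivial] using posSemidef_conjTranspose_mul_self L

variable [DecidableEq n] {L V : Matrix m n ℝ}

lemma mulVec_eq_zero_or_dotProduct_add_transpose_mul_pos (hsymm : (Vᵀ * L).IsSymm)
    (hgap : LtPosEigenvalues (opNorm V ^ 2) (Lᵀ * L))
    (x : n → ℝ) :
    L *ᵥ x = 0 ∨ 0 < x ⬝ᵥ (((L + V)ᵀ * L) *ᵥ x) := by
  obtain ⟨x₀, x₁, rfl, hx₀, hx₁⟩ :=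
    (posSemidef_transpose_mul_self L).exists_add_of_lt_pos_eigenvalues hgap x
  have hLx₀ : L *ᵥ x₀ = 0 := (transpose_mul_self_mulVec_eq_zero_iff L x₀).1 hx₀
  have hSx₀ : ((L + V)ᵀ * L) *ᵥ x₀ = 0 := by rw [← mulVec_mulVec, hLx₀, mulVec_zero]
  have hx₀S : x₀ ᵥ* ((L + V)ᵀ * L) = 0 := by
    rw [← (isSymm_add_transpose_mul hsymm).eq, vecMul_transpose, hSx₀]
  have hquad : (x₀ + x₁) ⬝ᵥ (((L + V)ᵀ * L) *ᵥ (x₀ + x₁))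
      = (L *ᵥ x₁) ⬝ᵥ (L *ᵥ x₁) + (V *ᵥ x₁) ⬝ᵥ (L *ᵥ x₁) := by
    rw [mulVec_add, hSx₀, zero_add, add_dotProduct, dotProduct_mulVec x₀, hx₀S, zero_dotProduct,
      zero_add, ← mulVec_mulVec, dotProduct_mulVec, vecMul_transpose, add_mulVec, add_dotProduct]
  rcases hx₁ with rfl | hlt
  · exact .inl (by simpa using hLx₀)
  refine .inr (hquad ▸ dotProduct_self_add_pos ?_)
  calc (V *ᵥ x₁) ⬝ᵥ (V *ᵥ x₁) ≤ opNorm V ^ 2 * (x₁ ⬝ᵥ x₁) := mulVec_dotProduct_le_opNorm_sq V x₁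
    _ < x₁ ⬝ᵥ ((Lᵀ * L) *ᵥ x₁) := hlt
    _ = (L *ᵥ x₁) ⬝ᵥ (L *ᵥ x₁) := by
      rw [← mulVec_mulVec, dotProduct_mulVec, vecMul_transpose]

lemma posSemidef_add_transpose_mul (hsymm : (Vᵀ * L).IsSymm)
    (hgap : LtPosEigenvalues (opNorm V ^ 2) (Lᵀ * L)) :
    ((L + V)ᵀ * L).PosSemidef := by
  refine .of_dotProduct_mulVec_nonneg ?_ fun x => ?_
  · exact isHermitian_iff_isSymm.2 (isSymm_add_transpose_mul hsymm)
  rcases mulVec_eq_zero_or_dotProduct_add_transpose_mul_pos hsymm hgap x with hx | hpos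
  · simp [← mulVec_mulVec, hx]
  · simpa using hpos.le

lemma add_transpose_mul_mulVec_eq_zero_iff (hsymm : (Vᵀ * L).IsSymm)
    (hgap : LtPosEigenvalues (opNorm V ^ 2) (Lᵀ * L))
    (x : n → ℝ) :
    ((L + V)ᵀ * L) *ᵥ x = 0 ↔ (Lᵀ * L) *ᵥ x = 0 := by
  rw [transpose_mul_self_mulVec_eq_zero_iff]
  refine ⟨fun hx => ?_, fun hx => by rw [← mulVec_mulVec, hx, mulVec_zero]⟩
  refine (mulVec_eq_zero_or_dotProduct_add_transpose_mul_pos hsymm hgap x).resolve_right ?_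
  rw [hx, dotProduct_zero]
  exact lt_irrefl 0

end Perturbation

lemma mul_eq_self_iff_of_mulVec_eq_zero_iff {n R : Type*} [Fintype n] [Ring R]
    {S A : Matrix n n R} (h : ∀ x, S *ᵥ x = 0 ↔ A *ᵥ x = 0) (Q : Matrix n n R) :
    S * Q = S ↔ A * Q = A := by
  have key : ∀ B : Matrix n n R, B * Q = B ↔ ∀ v, B *ᵥ (Q *ᵥ v - v) = 0 := fun B => by
    simp only [ext_iff_mulVec, mulVec_sub, mulVec_mulVec, sub_eq_zero]
  rw [key, key]
  exact forall_congr' fun v => h _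

section Orthogonal

variable {n : Type*} [Fintype n] {S O : Matrix n n ℝ}

lemma Matrix.PosSemidef.mul_eq_zero_of_transpose_mul_mul_eq_zero {m : Type*} [Fintype m]
    (hS : S.PosSemidef) {X : Matrix n m ℝ} (h : Xᵀ * S * X = 0) : S * X = 0 := by
  refine ext_iff_mulVec.2 fun v => ?_
  have hquad : (X *ᵥ v) ⬝ᵥ (S *ᵥ (X *ᵥ v)) = v ⬝ᵥ ((Xᵀ * S * X) *ᵥ v) := by
    rw [← mulVec_mulVec, ← mulVec_mulVec, dotProduct_mulVec v Xᵀ, vecMul_transpose]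
  rw [← mulVec_mulVec, zero_mulVec, ← hS.dotProduct_mulVec_zero_iff, star_trivial, hquad, h,
    zero_mulVec, dotProduct_zero]

variable [DecidableEq n]

lemma trace_transpose_one_sub_mul_mul_one_sub (hS : S.IsSymm) (hO : Oᵀ * O = 1) :
    ((1 - O)ᵀ * S * (1 - O)).trace = 2 * (S.trace - (S * O).trace) := by
  have hOS : (Oᵀ * S).trace = (S * O).trace := by
    rw [← trace_transpose, transpose_mul, transpose_transpose, hS.eq]
  have hOSO : (Oᵀ * S * O).trace = S.trace := by
    rw [trace_mul_cycle, mul_eq_one_comm.mp hO, Matrix.one_mul]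
  simp only [transpose_sub, transpose_one, Matrix.sub_mul, Matrix.mul_sub, Matrix.one_mul,
    Matrix.mul_one, trace_sub, hOS, hOSO]
  ring

lemma Matrix.PosSemidef.trace_mul_le_of_orthogonal (hS : S.PosSemidef) (hO : Oᵀ * O = 1) :
    (S * O).trace ≤ S.trace := by
  have h := (hS.conjTranspose_mul_mul_same (1 - O)).trace_nonneg
  rw [conjTranspose_eq_transpose_of_trivial,
    trace_transpose_one_sub_mul_mul_one_sub (isHermitian_iff_isSymm.1 hS.1) hO] at h
  linarith

lemma Matrix.PosSemidef.trace_mul_eq_iff_of_orthogonal (hS : S.PosSemidef) (hO : Oᵀ * O = 1) :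
    (S * O).trace = S.trace ↔ S * O = S := by
  refine ⟨fun h => ?_, fun h => by rw [h]⟩
  have hX := hS.conjTranspose_mul_mul_same (1 - O)
  rw [conjTranspose_eq_transpose_of_trivial] at hX
  have h0 : (1 - O)ᵀ * S * (1 - O) = 0 := hX.trace_eq_zero_iff.1 <| by
    rw [trace_transpose_one_sub_mul_mul_one_sub (isHermitian_iff_isSymm.1 hS.1) hO, h, sub_self,
      mul_zero]
  have hSX := hS.mul_eq_zero_of_transpose_mul_mul_eq_zero h0
  rwa [Matrix.mul_sub, Matrix.mul_one, sub_eq_zero, eq_comm] at hSX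

end Orthogonal

section Blocks

variable {d T : ℕ}

def IsBlockDiag (O : Mat d T) : Prop :=
  ∀ (t s : Fin T) (i j : Fin d), t ≠ s → O (t, i) (s, j) = 0

lemma blk_transpose (A : Mat d T) (t : Fin T) : blk Aᵀ t = (blk A t)ᵀ := rfl

lemma blk_transpose_mul (A B : Mat d T) (t : Fin T) :
    blk (Aᵀ * B) t = (colBlk A t)ᵀ * colBlk B t := by
  ext i j
  simp [blk, colBlk, mul_apply]

lemma colBlk_add (A B : Mat d T) (t : Fin T) : colBlk (A + B) t = colBlk A t + colBlk B t := rfl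

lemma blk_one (t : Fin T) : blk (1 : Mat d T) t = 1 := by
  ext i j
  simp [blk, one_apply]

lemma trace_eq_sum_trace_blk (A : Mat d T) : A.trace = ∑ t, (blk A t).trace := by
  simp [trace, Fintype.sum_prod_type, blk]

lemma blk_mul_of_isBlockDiag {O : Mat d T} (hO : IsBlockDiag O) (A : Mat d T) (t : Fin T) :
    blk (A * O) t = blk A t * blk O t := by
  ext i j
  simp only [blk, mul_apply, Fintype.sum_prod_type]
  exact Finset.sum_eq_single t (fun s _ hs => Finset.sum_eq_zero fun k _ => by
    rw [hO s t k j hs, mul_zero]) (fun h => absurd (Finset.mem_univ t) h)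

lemma eq_one_of_blk_eq_one {O : Mat d T} (hO : IsBlockDiag O) (h : ∀ t, blk O t = 1) :
    O = 1 := by
  ext ⟨t, i⟩ ⟨s, j⟩
  by_cases hts : t = s
  · subst hts
    exact congrFun (congrFun ((h t).trans (blk_one t).symm) i) j
  · rw [hO t s i j hts, one_apply_ne (by simp [hts])]

lemma memO_one : memO (1 : Mat d T) :=
  ⟨fun _ _ _ _ hts => one_apply_ne (by simp [hts]), by simp⟩

lemma blk_transpose_mul_self_of_memO {O : Mat d T} (hO : memO O) (t : Fin T) :
    (blk O t)ᵀ * blk O t = 1 := by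
  rw [← blk_transpose, ← blk_mul_of_isBlockDiag hO.1, hO.2, blk_one]

end Blocks

section Frobenius

lemma frobNorm_nonneg {m n : Type*} [Fintype m] [Fintype n] (A : Matrix m n ℝ) :
    0 ≤ frobNorm A :=
  Real.sqrt_nonneg _

lemma frobNorm_sq {m n : Type*} [Fintype m] [Fintype n] (A : Matrix m n ℝ) :
    frobNorm A ^ 2 = (Aᵀ * A).trace := by
  rw [frobNorm, Real.sq_sqrt (by positivity), Finset.sum_comm]
  simp [trace, mul_apply, sq]

variable {d T : ℕ} {L M : Mat d T}

lemma frobNorm_sub_mul_sq {O : Mat d T} (hO : memO O) :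
    frobNorm (L - M * O) ^ 2 = (Lᵀ * L).trace + (Mᵀ * M).trace
      - 2 * ∑ t, (blk (Lᵀ * M) t * blk O t).trace := by
  have hcross : ((M * O)ᵀ * L).trace = (Lᵀ * M * O).trace := by
    rw [← trace_transpose]
    simp [transpose_mul, Matrix.mul_assoc]
  have hsq : ((M * O)ᵀ * (M * O)).trace = (Mᵀ * M).trace := by
    rw [transpose_mul, Matrix.mul_assoc, trace_mul_comm, Matrix.mul_assoc, Matrix.mul_assoc,
      mul_eq_one_comm.mp hO.2, Matrix.mul_one]
  rw [frobNorm_sq, transpose_sub, Matrix.sub_mul, Matrix.mul_sub, Matrix.mul_sub, trace_sub,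
    trace_sub, trace_sub, hcross, hsq, ← Matrix.mul_assoc, trace_eq_sum_trace_blk (Lᵀ * M * O)]
  simp only [blk_mul_of_isBlockDiag hO.1]
  ring

end Frobenius

section Optimizers

variable {d T : ℕ} {L M O : Mat d T}

lemma frobNorm_sub_mul_sq_eq_add (hO : memO O) :
    frobNorm (L - M * O) ^ 2 = frobNorm (L - M) ^ 2
      + 2 * ∑ t, ((blk (Lᵀ * M) t).trace - (blk (Lᵀ * M) t * blk O t).trace) := by
  have h1 := frobNorm_sub_mul_sq (L := L) (M := M) memO_one
  simp only [blk_one, Matrix.mul_one] at h1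
  rw [frobNorm_sub_mul_sq hO, h1, Finset.sum_sub_distrib]
  ring

lemma frobNorm_sub_le (hpsd : ∀ t, (blk (Lᵀ * M) t).PosSemidef) (hO : memO O) :
    frobNorm (L - M) ≤ frobNorm (L - M * O) := by
  rw [← sq_le_sq₀ (frobNorm_nonneg _) (frobNorm_nonneg _), frobNorm_sub_mul_sq_eq_add hO]
  have := Finset.sum_nonneg fun t (_ : t ∈ Finset.univ) => sub_nonneg.2
    ((hpsd t).trace_mul_le_of_orthogonal (blk_transpose_mul_self_of_memO hO t))
  linarith

lemma frobNorm_sub_mul_eq_iff (hpsd : ∀ t, (blk (Lᵀ * M) t).PosSemidef) (hO : memO O) :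
    frobNorm (L - M * O) = frobNorm (L - M) ↔
      ∀ t, blk (Lᵀ * M) t * blk O t = blk (Lᵀ * M) t := by
  rw [← sq_eq_sq₀ (frobNorm_nonneg _) (frobNorm_nonneg _), frobNorm_sub_mul_sq_eq_add hO,
    add_eq_left, mul_eq_zero, or_iff_right two_ne_zero, Finset.sum_eq_zero_iff_of_nonneg
      fun t _ => sub_nonneg.2
        ((hpsd t).trace_mul_le_of_orthogonal (blk_transpose_mul_self_of_memO hO t))]
  simp only [Finset.mem_univ, true_implies, sub_eq_zero]
  exact forall_congr' fun t =>
    eq_comm.trans ((hpsd t).trace_mul_eq_iff_of_orthogonal (blk_transpose_mul_self_of_memO hO t))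

lemma dABW_eq_frobNorm (hpsd : ∀ t, (blk (Lᵀ * M) t).PosSemidef) :
    dABW L M = frobNorm (L - M) := by
  refine le_antisymm (csInf_le ⟨0, ?_⟩ ⟨1, memO_one, by rw [Matrix.mul_one]⟩) ?_
  · rintro _ ⟨O, -, rfl⟩
    exact frobNorm_nonneg _
  · refine le_csInf ⟨_, 1, memO_one, rfl⟩ ?_
    rintro _ ⟨O, hO, rfl⟩
    exact frobNorm_sub_le hpsd hO

lemma OStar_eq_setOf (hpsd : ∀ t, (blk (Lᵀ * M) t).PosSemidef) :
    OStar L M = {O | memO O ∧ ∀ t, blk (Lᵀ * M) t * blk O t = blk (Lᵀ * M) t} := by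
  ext O
  simp only [OStar, Set.mem_ofPred_eq, dABW_eq_frobNorm hpsd]
  exact and_congr_right (frobNorm_sub_mul_eq_iff hpsd)

end Optimizers

lemma OStar_self_eq_singleton_one {d T : ℕ} {L : Mat d T} (hL : L ∈ LReg) :
    OStar L L = {1} := by
  rw [OStar_eq_setOf fun t => (hL.2 t).posSemidef]
  ext O
  simp only [Set.mem_ofPred_eq, Set.mem_singleton_iff]
  refine ⟨fun ⟨hO, hblk⟩ => eq_one_of_blk_eq_one hO.1 fun t => ?_, ?_⟩
  · exact (hL.2 t).isUnit.mul_left_cancel ((hblk t).trans (Matrix.mul_one _).symm)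
  · rintro rfl
    exact ⟨memO_one, fun t => by rw [blk_one, Matrix.mul_one]⟩

theorem stmt14_general (d T : ℕ) (L V : Mat d T)
    (hV : V ∈ calV L)
    (hsmall : ∀ t : Fin T, ∀ μ : ℝ, 0 < μ →
      (∃ x : Fin d → ℝ, x ≠ 0 ∧ (blk (Lᵀ * L) t).mulVec x = μ • x) →
      opNorm (colBlk V t) ^ 2 < μ) :
    (∀ t : Fin T, (blk ((L + V)ᵀ * L) t).PosSemidef) ∧
    OStar L (L + V) = OStar L L ∧
    (L ∈ LReg → OStar L (L + V) = {(1 : Mat d T)}) := by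
  have hsymm : ∀ t, ((colBlk V t)ᵀ * colBlk L t).IsSymm := fun t => by
    rw [← blk_transpose_mul]
    exact hV.2 t
  have hgap := fun t => blk_transpose_mul L L t ▸ hsmall t
  have hS : ∀ t, blk ((L + V)ᵀ * L) t = (colBlk L t + colBlk V t)ᵀ * colBlk L t := fun t => by
    rw [blk_transpose_mul, colBlk_add]
  have hpsd : ∀ t, (blk ((L + V)ᵀ * L) t).PosSemidef := fun t =>
    hS t ▸ posSemidef_add_transpose_mul (hsymm t) (hgap t)
  have hS' : ∀ t, blk (Lᵀ * (L + V)) t = blk ((L + V)ᵀ * L) t := fun t => by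
    rw [← (isHermitian_iff_isSymm.1 (hpsd t).1).eq, ← blk_transpose, transpose_mul,
      transpose_transpose]
  have hLL : ∀ t, (blk (Lᵀ * L) t).PosSemidef := fun t =>
    blk_transpose_mul L L t ▸ posSemidef_transpose_mul_self _
  have hOStar : OStar L (L + V) = OStar L L := by
    rw [OStar_eq_setOf fun t => hS' t ▸ hpsd t, OStar_eq_setOf hLL]
    ext O
    simp only [Set.mem_ofPred_eq, hS', hS, blk_transpose_mul L L]
    exact and_congr_right fun _ => forall_congr' fun t =>
      mul_eq_self_iff_of_mulVec_eq_zero_iff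
        (add_transpose_mul_mulVec_eq_zero_iff (hsymm t) (hgap t)) _
  exact ⟨hpsd, hOStar, fun hL => hOStar.trans (OStar_self_eq_singleton_one hL)⟩

/-- if `V ∈ 𝒱(L)` and for every `t` the squared operator norm of the `t`-th
block column of `V` is smaller than every strictly positive eigenvalue of `(LᵀL)_{t,t}`
(i.e. smaller than `λ⁺_min((LᵀL)_{t,t})`, with the convention `λ⁺_min(0) = +∞`), then
`((L+V)ᵀL)_{t,t}` is positive semidefinite for all `t` and `𝐎*(L, L+V) = 𝐎*(L,L)`;
in particular, `𝐎*(L, L+V) = {Id}` whenever `L ∈ 𝐋^reg`. -/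
theorem stmt14 (d T : ℕ) (hd : 0 < d) (hT : 0 < T) (L V : Mat d T)
    (hL : memL L) (hV : V ∈ calV L)
    (hsmall : ∀ t : Fin T, ∀ μ : ℝ, 0 < μ →
      (∃ x : Fin d → ℝ, x ≠ 0 ∧ (blk (Lᵀ * L) t).mulVec x = μ • x) →
      opNorm (colBlk V t) ^ 2 < μ) :
    (∀ t : Fin T, (blk ((L + V)ᵀ * L) t).PosSemidef) ∧
    OStar L (L + V) = OStar L L ∧
    (L ∈ LReg → OStar L (L + V) = {(1 : Mat d T)}) :=
  stmt14_general d T L V hV hsmall
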